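/- arXiv:1302.5742 — 2 statements merged into one kernel-verified Lean document; each statement's English description precedes it below -/
import Mathlib

section
/- Let k be a field of characteristic 3. Then the artinian complete intersection A = k[x,y,z]/(x²,y³,z³) fails the Weak Lefschetz Property: for every linear form L, the multiplication map ×L: A_2 → A_3 is not injective (both spaces have dimension 5). -/
open MvPolynomial Module

abbrev MPoly (k : Type) [Field k] (n : ℕ) := MvPolynomial (Fin n) k

variable {k : Type} [Field k] {n : ℕ}

def homogIdeal (I : Ideal (MPoly k n)) : Prop :=
  ∀ f ∈ I, ∀ i : ℕ, homogeneousComponent i f ∈ I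

noncomputable def comp (I : Ideal (MPoly k n)) (i : ℕ) : Submodule k (MPoly k n ⧸ I) :=
  (homogeneousSubmodule (Fin n) k i).map (Ideal.Quotient.mkₐ k I).toLinearMap

noncomputable def hilb (I : Ideal (MPoly k n)) (i : ℕ) : ℕ := finrank k (comp I i)

noncomputable def socle (I : Ideal (MPoly k n)) : Submodule k (MPoly k n ⧸ I) :=
  ⨅ j : Fin n, LinearMap.ker (LinearMap.mulLeft k (Ideal.Quotient.mk I (X j)))

def socDeg (I : Ideal (MPoly k n)) (e : ℕ) : Prop :=
  hilb I e ≠ 0 ∧ ∀ j, e < j → hilb I j = 0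

def injStep (L : MPoly k n) (I : Ideal (MPoly k n)) (i : ℕ) : Prop :=
  ∀ f : MPoly k n, f.IsHomogeneous i → L * f ∈ I → f ∈ I

def surjStep (L : MPoly k n) (I : Ideal (MPoly k n)) (i : ℕ) : Prop :=
  ∀ g : MPoly k n, g.IsHomogeneous (i + 1) → ∃ f, f.IsHomogeneous i ∧ g - L * f ∈ I

def WLP (I : Ideal (MPoly k n)) : Prop :=
  ∃ L : MPoly k n, L.IsHomogeneous 1 ∧ ∀ i : ℕ, injStep L I i ∨ surjStep L I i

def SLP (I : Ideal (MPoly k n)) : Prop :=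
  ∃ L : MPoly k n, L.IsHomogeneous 1 ∧ ∀ i j : ℕ, i ≤ j →
    ((∀ f : MPoly k n, f.IsHomogeneous i → L ^ (j - i) * f ∈ I → f ∈ I) ∨
     (∀ g : MPoly k n, g.IsHomogeneous j → ∃ f, f.IsHomogeneous i ∧ g - L ^ (j - i) * f ∈ I))

noncomputable def mulMap (L : MPoly k n) (hL : L.IsHomogeneous 1) (I : Ideal (MPoly k n)) (i : ℕ) :
    comp I i →ₗ[k] comp I (i + 1) :=
  (LinearMap.mulLeft k ((Ideal.Quotient.mk I) L)).restrict (by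
    rintro x ⟨f, hf, rfl⟩
    refine ⟨L * f, ?_, ?_⟩
    · simp only [SetLike.mem_coe, mem_homogeneousSubmodule] at hf ⊢
      exact Nat.add_comm 1 i ▸ hL.mul hf
    · simp [Ideal.Quotient.mkₐ_eq_mk, map_mul])

/-!
The monomials `x^i y^j z^l` with `i < 2`, `j, l < 3` map to a basis of `A`, which gives
`dim A₂ = dim A₃ = 5`. In characteristic `3`, Frobenius gives `L³ = a³x³ + b³y³ + c³z³ ∈ I` for
every linear form `L = ax + by + cz`, so `L²` is a nonzero element of the kernel of
`×L : A₂ → A₃` unless `L² ∈ I`. But `b²` and `c²` are the coefficients of the standard monomials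
`y²`, `z²` in `L²`, so `L² ∈ I` forces `L = ax`, and then `xy` is in the kernel.
-/

namespace MvPolynomial

variable {σ R : Type*} [CommSemiring R]

noncomputable def monomialIdeal (S : Set (σ →₀ ℕ)) : Ideal (MvPolynomial σ R) :=
  Ideal.span ((fun s => monomial s 1) '' S)

theorem coeff_eq_zero_of_mem_monomialIdeal {S : Set (σ →₀ ℕ)} {f : MvPolynomial σ R}
    (hf : f ∈ monomialIdeal S) {d : σ →₀ ℕ} (hd : ∀ s ∈ S, ¬ s ≤ d) : coeff d f = 0 := by
  by_contra h
  obtain ⟨s, hs, hsd⟩ := mem_ideal_span_monomial_image.1 hf d (mem_support_iff.2 h)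
  exact hd s hs hsd

theorem IsHomogeneous.coeff_single_two_sq {L : MvPolynomial σ R} (hL : L.IsHomogeneous 1) (j : σ) :
    coeff (Finsupp.single j 2) (L ^ 2) = coeff (Finsupp.single j 1) L ^ 2 := by
  classical
  rw [sq, coeff_mul, Finsupp.antidiagonal_single, Finset.sum_map,
    Finset.Nat.sum_antidiagonal_eq_sum_range_succ_mk]
  simp only [Finset.sum_range_succ, Finset.sum_range_zero, Nat.reduceSub]
  simp [hL.coeff_eq_zero, sq]

theorem IsHomogeneous.pow_expChar_mem_span_X_pow {L : MvPolynomial σ R} (hL : L.IsHomogeneous 1)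
    (p : ℕ) [ExpChar R p] :
    L ^ p ∈ Ideal.span (Set.range fun i => (X i : MvPolynomial σ R) ^ p) := by
  rw [← mem_homogeneousSubmodule, homogeneousSubmodule_one_eq_span_X] at hL
  induction hL using Submodule.span_induction with
  | mem x hx =>
    obtain ⟨i, rfl⟩ := hx
    exact Ideal.subset_span ⟨i, rfl⟩
  | zero => simp [zero_pow (expChar_pos R p).ne']
  | add x y _ _ hx hy => rw [add_pow_expChar]; exact add_mem hx hy
  | smul a x _ hx => rw [smul_eq_C_mul, mul_pow]; exact Ideal.mul_mem_left _ _ hx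

end MvPolynomial

open MvPolynomial

theorem hilb_monomialIdeal {k : Type} [Field k] {n : ℕ} (S : Set (Fin n →₀ ℕ)) (N : ℕ) :
    hilb (monomialIdeal S : Ideal (MPoly k n)) N =
      Nat.card {d : Fin n →₀ ℕ | d.degree = N ∧ ∀ s ∈ S, ¬ s ≤ d} := by
  set T := {d : Fin n →₀ ℕ | d.degree = N ∧ ∀ s ∈ S, ¬ s ≤ d}
  set π := (Ideal.Quotient.mkₐ k (monomialIdeal S : Ideal (MPoly k n))).toLinearMap
  have hsplit : homogeneousSubmodule (Fin n) k N =
      restrictSupport k T ⊔ restrictSupport k ({d | d.degree = N} \ T) := by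
    rw [show homogeneousSubmodule (Fin n) k N = restrictSupport k {d | d.degree = N} from
        homogeneousSubmodule_eq_finsupp_supported .., restrictSupport_eq_span,
      restrictSupport_eq_span, restrictSupport_eq_span, ← Submodule.span_union, ← Set.image_union,
      Set.union_sdiff_cancel fun d hd => hd.1]
  have hker : restrictSupport k ({d | d.degree = N} \ T) ≤ LinearMap.ker π := by
    intro f hf
    rw [LinearMap.mem_ker]
    refine Ideal.Quotient.eq_zero_iff_mem.2 (mem_ideal_span_monomial_image.2 fun d hd => ?_)
    obtain ⟨hdeg, hnot⟩ := hf hd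
    by_contra h
    push Not at h
    exact hnot ⟨hdeg, h⟩
  have hdisj : Disjoint (restrictSupport k T) (LinearMap.ker π) := by
    refine LinearMap.disjoint_ker.2 fun f hf hπ => ?_
    ext d
    by_cases hd : d ∈ f.support
    · exact coeff_eq_zero_of_mem_monomialIdeal (Ideal.Quotient.eq_zero_iff_mem.1 hπ) (hf hd).2
    · simpa using hd
  calc hilb (monomialIdeal S : Ideal (MPoly k n)) N
      = finrank k ((restrictSupport k T).map π) := by
        rw [hilb, comp, hsplit, Submodule.map_sup, LinearMap.le_ker_iff_map.1 hker, sup_bot_eq]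
    _ = finrank k (restrictSupport k T) := by
        rw [← LinearMap.range_domRestrict]
        exact (LinearEquiv.ofInjective _
          (LinearMap.injective_domRestrict_iff.2 hdisj)).finrank_eq.symm
    _ = Nat.card T := finrank_eq_nat_card_basis (basisRestrictSupport k T)

theorem natCard_setOf_degree_eq_and {n : ℕ} (N : ℕ) (P : (Fin n →₀ ℕ) → Prop) [DecidablePred P] :
    Nat.card {d : Fin n →₀ ℕ | d.degree = N ∧ P d} =
      ((Finset.Nat.antidiagonalTuple n N).filter
        fun f => P (Finsupp.equivFunOnFinite.symm f)).card := by
  rw [← Nat.card_eq_finsetCard]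
  refine Nat.card_congr (Finsupp.equivFunOnFinite.subtypeEquiv fun d => ?_)
  simp [Finsupp.degree_eq_sum, Finset.Nat.mem_antidiagonalTuple, and_comm]

section

variable {k : Type} [Field k]

theorem span_X_pow_eq_monomialIdeal :
    (Ideal.span {X 0 ^ 2, X 1 ^ 3, X 2 ^ 3} : Ideal (MPoly k 3)) =
      monomialIdeal {Finsupp.single 0 2, Finsupp.single 1 3, Finsupp.single 2 3} := by
  simp [monomialIdeal, Set.image_insert_eq, X_pow_eq_monomial]

theorem hilb_span_X_pow (N : ℕ) :
    hilb (Ideal.span {X 0 ^ 2, X 1 ^ 3, X 2 ^ 3} : Ideal (MPoly k 3)) N =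
      ((Finset.Nat.antidiagonalTuple 3 N).filter fun f => f 0 < 2 ∧ f 1 < 3 ∧ f 2 < 3).card := by
  rw [span_X_pow_eq_monomialIdeal, hilb_monomialIdeal]
  simp only [Set.mem_insert_iff, Set.mem_singleton_iff, forall_eq_or_imp, forall_eq,
    Finsupp.single_le_iff, not_le]
  exact natCard_setOf_degree_eq_and N fun d => d 0 < 2 ∧ d 1 < 3 ∧ d 2 < 3

theorem span_X_pow_three_le :
    Ideal.span (Set.range fun i => (X i : MPoly k 3) ^ 3) ≤
      Ideal.span {X 0 ^ 2, X 1 ^ 3, X 2 ^ 3} := by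
  refine Ideal.span_le.2 ?_
  rintro _ ⟨i, rfl⟩
  fin_cases i
  · show X 0 ^ 3 ∈ _
    rw [pow_succ]
    exact Ideal.mul_mem_right _ _ (Ideal.subset_span (Set.mem_insert _ _))
  all_goals exact Ideal.subset_span (by simp)

theorem exists_isHomogeneous_two_notMem_mul_mem [CharP k 3] {L : MPoly k 3}
    (hL : L.IsHomogeneous 1) :
    ∃ f : MPoly k 3, f.IsHomogeneous 2 ∧ f ∉ Ideal.span {X 0 ^ 2, X 1 ^ 3, X 2 ^ 3} ∧
      L * f ∈ Ideal.span {X 0 ^ 2, X 1 ^ 3, X 2 ^ 3} := by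
  by_cases hsq : L ^ 2 ∈ (Ideal.span {X 0 ^ 2, X 1 ^ 3, X 2 ^ 3} : Ideal (MPoly k 3))
  · obtain ⟨c, rfl⟩ : ∃ c : Fin 3 → k, ∑ i, c i • X i = L := by
      rw [← mem_homogeneousSubmodule, homogeneousSubmodule_one_eq_span_X] at hL
      exact (Submodule.mem_span_range_iff_exists_fun k).1 hL
    rw [span_X_pow_eq_monomialIdeal] at hsq
    have hc : ∀ j : Fin 3, j ≠ 0 → c j = 0 := by
      intro j hj
      have := coeff_eq_zero_of_mem_monomialIdeal hsq (d := Finsupp.single j 2) (by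
        fin_cases j <;> simp_all [Finsupp.single_le_iff])
      simpa [hL.coeff_single_two_sq, coeff_sum, coeff_X, Finsupp.single_eq_single_iff] using this
    refine ⟨X 0 * X 1, (isHomogeneous_X _ _).mul (isHomogeneous_X _ _), fun h => ?_, ?_⟩
    · rw [span_X_pow_eq_monomialIdeal] at h
      have := coeff_eq_zero_of_mem_monomialIdeal h (d := Finsupp.single 0 1 + Finsupp.single 1 1)
        (by simp [Finsupp.single_le_iff])
      simp [X, monomial_mul] at this
    · have hmem : (X 1 * X 0 ^ 2 : MPoly k 3) ∈ Ideal.span {X 0 ^ 2, X 1 ^ 3, X 2 ^ 3} :=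
        Ideal.mul_mem_left _ _ (Ideal.subset_span (Set.mem_insert _ _))
      convert Ideal.mul_mem_left _ (C (c 0)) hmem using 1
      simp only [Fin.sum_univ_three, hc 1 (by decide), hc 2 (by decide), zero_smul, add_zero]
      rw [smul_eq_C_mul]
      ring
  · refine ⟨L ^ 2, by simpa using hL.pow 2, hsq, pow_succ' L 2 ▸ span_X_pow_three_le ?_⟩
    exact hL.pow_expChar_mem_span_X_pow 3

end

theorem stmt4 (k : Type) [Field k] [CharP k 3]
    (I : Ideal (MPoly k 3))
    (hI : I = Ideal.span {(X 0 : MPoly k 3) ^ 2, X 1 ^ 3, X 2 ^ 3}) :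
    hilb I 2 = 5 ∧ hilb I 3 = 5 ∧
    ∀ L : MPoly k 3, L.IsHomogeneous 1 →
      ∃ f : MPoly k 3, f.IsHomogeneous 2 ∧ f ∉ I ∧ L * f ∈ I := by
  subst hI
  exact ⟨(hilb_span_X_pow 2).trans (by decide), (hilb_span_X_pow 3).trans (by decide),
    fun _ hL => exists_isHomogeneous_two_notMem_mul_mem hL⟩
end

section
/- Let k have characteristic ≠ 3 and let H be a pencil of plane cubics containing xyz whose base locus is a reduced Hesse configuration (9 reduced points such that each line through 2 of them contains a third). Then H = ⟨a x³ + b y³ + c z³, xyz⟩ for some nonzero constants a,b,c ∈ k. -/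
/-!
Since `xyz` lies in the pencil, the base locus `Y` is cut out by `xyz` and one cubic `c` of the
pencil, so it lies on the coordinate triangle. A side `x_l = 0` cannot lie in the finite set `Y`,
so it meets `Y` in at most three points (the zeros of the binary cubic `c|_{x_l = 0}`); as `|Y| = 9`,
every side carries exactly three points of `Y` and no vertex of the triangle lies on `Y`.

In the affine coordinate `y/x` on `z = 0`, `z/y` on `x = 0` and `x/z` on `y = 0`, three points,
one on each side, are collinear iff the product of their coordinates is `-1`. By the Hesse
property, for `t` on one side, `u ↦ -(t u)⁻¹` is then a bijection between the other two sides,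
so for two points `t, t'` of the first side, multiplication by `t'/t` permutes the three nonzero
coordinates of the second side, and `(t'/t)³ = 1`. Three distinct roots with equal cubes force
the binary cubic `c|_{x_l = 0}` to have no middle terms, so `c = a x³ + b y³ + d z³ + m xyz`, and
`a b d ≠ 0` because the vertices are not on `Y`.
-/

open MvPolynomial
open scoped LinearAlgebra.Projectivization

theorem Set.ncard_union_union_le {α : Type*} (s t u : Set α) :
    (s ∪ t ∪ u).ncard ≤ s.ncard + t.ncard + u.ncard :=
  (ncard_union_le _ _).trans (Nat.add_le_add_right (ncard_union_le _ _) _)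

section Span

variable {K V : Type*} [AddCommGroup V]

theorem Submodule.span_pair_le [Semiring K] [Module K V] {S : Submodule K V} {u v : V}
    (hu : u ∈ S) (hv : v ∈ S) : span K {u, v} ≤ S :=
  span_le.2 (Set.insert_subset_iff.2 ⟨hu, Set.singleton_subset_iff.2 hv⟩)

theorem Submodule.span_pair_eq_span_pair_of_mem [DivisionRing K] [Module K V] {x a b : V}
    (hx : x ∈ span K {a, b}) (hx0 : x ≠ 0) :
    span K {a, b} = span K {x, a} ∨ span K {a, b} = span K {x, b} := by
  by_cases hxb : x ∈ span K {b}
  · left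
    obtain ⟨s, hs⟩ := mem_span_singleton.1 hxb
    have hs0 : s ≠ 0 := by rintro rfl; simp [← hs] at hx0
    have hb : b ∈ span K {x, a} := by
      rw [← inv_smul_smul₀ hs0 b, hs]
      exact smul_mem _ _ (subset_span (by simp))
    exact le_antisymm (span_pair_le (subset_span (by simp)) hb)
      (span_pair_le hx (subset_span (by simp)))
  · right
    exact le_antisymm (span_pair_le (mem_span_insert_exchange hx hxb) (subset_span (by simp)))
      (span_pair_le hx (subset_span (by simp)))

theorem Submodule.span_pair_add_smul [Ring K] [Module K V] (x y : V) (a : K) :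
    span K {x, y + a • x} = span K {y, x} := by
  have hx : x ∈ span K {x, y + a • x} := subset_span (by simp)
  have hy : y + a • x ∈ span K {x, y + a • x} := subset_span (by simp)
  have hx' : x ∈ span K {y, x} := subset_span (by simp)
  have hy' : y ∈ span K {y, x} := subset_span (by simp)
  refine le_antisymm (span_pair_le hx' (add_mem hy' (smul_mem _ _ hx'))) (span_pair_le ?_ hx)
  simpa using sub_mem hy (smul_mem _ a hx)

end Span

theorem MvPolynomial.eval_eq_zero_and_eval_eq_zero_iff_of_span_eq {σ k : Type*} [Field k]
    {f g f' g' : MvPolynomial σ k} (h : Submodule.span k {f, g} = Submodule.span k {f', g'})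
    (v : σ → k) : eval v f = 0 ∧ eval v g = 0 ↔ eval v f' = 0 ∧ eval v g' = 0 := by
  have key (f g : MvPolynomial σ k) : (eval v f = 0 ∧ eval v g = 0) ↔
      Submodule.span k {f, g} ≤ LinearMap.ker (aeval v).toLinearMap := by
    simp [Submodule.span_le, Set.insert_subset_iff]
  rw [key, key, h]

theorem Projectivization.eq_of_smul_rep {K V : Type*} [DivisionRing K] [AddCommGroup V]
    [Module K V] {p q : ℙ K V} (a : K) (h : a • q.rep = p.rep) : p = q := by
  rw [← p.mk_rep, ← q.mk_rep, mk_eq_mk_iff']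
  exact ⟨a, h⟩

theorem Projectivization.rep_mk_apply_eq_zero_iff {K ι : Type*} [Field K] {v : ι → K}
    (hv : v ≠ 0) (i : ι) : (mk K v hv).rep i = 0 ↔ v i = 0 := by
  obtain ⟨a, ha⟩ := exists_smul_eq_mk_rep K v hv
  simp [← ha, Units.smul_def]

def IsSylvesterGallai {K V : Type*} [DivisionRing K] [AddCommGroup V] [Module K V]
    (Y : Set (ℙ K V)) : Prop :=
  ∀ p ∈ Y, ∀ q ∈ Y, p ≠ q → ∃ r ∈ Y, r ≠ p ∧ r ≠ q ∧ r.rep ∈ Submodule.span K {p.rep, q.rep}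

section Fin3

theorem fin3_cases (l n : Fin 3) : n = l ∨ n = l + 1 ∨ n = l + 2 := by
  revert l n; decide

theorem fin3_add_one_add_one (l : Fin 3) : l + 1 + 1 = l + 2 := by simp [add_assoc]

theorem fin3_add_one_add_two (l : Fin 3) : l + 1 + 2 = l := by simp [add_assoc]

theorem fin3_add_two_add_one (l : Fin 3) : l + 2 + 1 = l := by simp [add_assoc]

theorem fin3_add_two_add_two (l : Fin 3) : l + 2 + 2 = l + 1 := by simp [add_assoc]

theorem funext_fin3 {α : Type*} (l : Fin 3) {v w : Fin 3 → α} (h₀ : v l = w l)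
    (h₁ : v (l + 1) = w (l + 1)) (h₂ : v (l + 2) = w (l + 2)) : v = w :=
  funext fun n => by rcases fin3_cases l n with rfl | rfl | rfl <;> assumption

end Fin3

variable {k : Type*} [Field k]

theorem pow_card_eq_one_of_mul_mem {U : Finset k} (hU : 0 ∉ U) {ζ : k} (hζ : ζ ≠ 0)
    (h : ∀ u ∈ U, ζ * u ∈ U) : ζ ^ U.card = 1 := by
  classical
  have hinj : Set.InjOn (ζ * ·) U := fun u _ v _ huv => mul_left_cancel₀ hζ huv
  have himage : U.image (ζ * ·) = U := Finset.eq_of_subset_of_card_le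
    (Finset.image_subset_iff.2 h) (Finset.card_image_of_injOn hinj).ge
  have hprod : ∏ u ∈ U, u ≠ 0 := Finset.prod_ne_zero_iff.2 fun u hu h0 => hU (h0 ▸ hu)
  refine mul_right_cancel₀ hprod ?_
  calc ζ ^ U.card * ∏ u ∈ U, u = ∏ u ∈ U, ζ * u := by
        rw [Finset.prod_mul_distrib, Finset.prod_const]
    _ = ∏ u ∈ U.image (ζ * ·), u := (Finset.prod_image (f := id) hinj).symm
    _ = 1 * ∏ u ∈ U, u := by rw [himage, one_mul]

/-- `u ↦ -(t u)⁻¹` is a bijection `U → V` for every `t ∈ T`, so multiplication by `t' / t`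
permutes `U`. -/
theorem pow_three_eq_of_neg_inv_mul_mem {T U V : Set k} (hU : U.ncard = 3) (hV : V.ncard = 3)
    (hT0 : 0 ∉ T) (hU0 : 0 ∉ U) (hTUV : ∀ t ∈ T, ∀ u ∈ U, -(t * u)⁻¹ ∈ V)
    {t t' : k} (ht : t ∈ T) (ht' : t' ∈ T) : t ^ 3 = t' ^ 3 := by
  have hUfin : U.Finite := Set.finite_of_ncard_ne_zero (by omega)
  have ht0 : t ≠ 0 := fun h => hT0 (h ▸ ht)
  have ht'0 : t' ≠ 0 := fun h => hT0 (h ▸ ht')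
  have himage : (fun u => -(t * u)⁻¹) '' U = V := by
    have hinj : Set.InjOn (fun u => -(t * u)⁻¹) U := fun u _ v _ huv =>
      mul_left_cancel₀ ht0 (by simpa using huv)
    exact Set.eq_of_subset_of_ncard_le (Set.image_subset_iff.2 fun u hu => hTUV t ht u hu)
      (by rw [hinj.ncard_image, hU, hV]) (Set.finite_of_ncard_ne_zero (by omega))
  have hmul : ∀ u ∈ hUfin.toFinset, t' / t * u ∈ hUfin.toFinset := by
    intro u hu
    rw [Set.Finite.mem_toFinset] at hu ⊢
    obtain ⟨v, hv, hvu⟩ := himage.symm ▸ hTUV t' ht' u hu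
    rw [neg_inj, inv_inj] at hvu
    have : v = t' / t * u := by
      field_simp
      linear_combination hvu
    exact this ▸ hv
  have h1 := pow_card_eq_one_of_mul_mem (by simpa using hU0) (div_ne_zero ht'0 ht0) hmul
  rw [← Set.ncard_eq_toFinset_card U hUfin, hU, div_pow,
    div_eq_one_iff_eq (pow_ne_zero 3 ht0)] at h1
  exact h1.symm

namespace Cubic

/-- The homogenization of `P`, with `s` as the homogenizing variable. -/
def homEval (P : Cubic k) (s t : k) : k :=
  P.a * t ^ 3 + P.b * s * t ^ 2 + P.c * s ^ 2 * t + P.d * s ^ 3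

theorem homEval_eq_mul_eval {s : k} (hs : s ≠ 0) (P : Cubic k) (t : k) :
    P.homEval s t = s ^ 3 * P.toPoly.eval (t / s) := by
  simp only [homEval, toPoly, Polynomial.eval_add, Polynomial.eval_mul, Polynomial.eval_pow,
    Polynomial.eval_C, Polynomial.eval_X]
  field_simp

theorem b_eq_zero_and_c_eq_zero_of_pow_three_eq (P : Cubic k) {T : Set k}
    (hT : T.ncard = 3) (hroot : ∀ t ∈ T, P.toPoly.eval t = 0)
    (hcube : ∀ t ∈ T, ∀ t' ∈ T, t ^ 3 = t' ^ 3) : P.b = 0 ∧ P.c = 0 := by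
  obtain ⟨t₁, t₂, t₃, h₁₂, h₁₃, h₂₃, rfl⟩ := Set.ncard_eq_three.1 hT
  simp only [Set.mem_insert_iff, Set.mem_singleton_iff, forall_eq_or_imp, forall_eq] at hroot hcube
  simp only [toPoly, Polynomial.eval_add, Polynomial.eval_mul, Polynomial.eval_pow,
    Polynomial.eval_C, Polynomial.eval_X] at hroot
  obtain ⟨r₁, r₂, r₃⟩ := hroot
  obtain ⟨⟨-, c₁₂, c₁₃⟩, -⟩ := hcube
  have e₁₂ : P.c + P.b * (t₁ + t₂) = 0 := by
    apply mul_left_cancel₀ (sub_ne_zero_of_ne h₁₂)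
    linear_combination r₁ - r₂ - P.a * c₁₂
  have e₁₃ : P.c + P.b * (t₁ + t₃) = 0 := by
    apply mul_left_cancel₀ (sub_ne_zero_of_ne h₁₃)
    linear_combination r₁ - r₃ - P.a * c₁₃
  have hb : P.b = 0 := by
    apply mul_left_cancel₀ (sub_ne_zero_of_ne h₂₃)
    linear_combination e₁₂ - e₁₃
  exact ⟨hb, by linear_combination e₁₂ - (t₁ + t₂) * hb⟩

end Cubic

namespace HessePencil

noncomputable def exp3 (a b c : ℕ) : Fin 3 →₀ ℕ := Finsupp.equivFunOnFinite.symm ![a, b, c]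

theorem exp3_inj {a b c a' b' c' : ℕ} :
    exp3 a b c = exp3 a' b' c' ↔ a = a' ∧ b = b' ∧ c = c' := by
  simp [exp3, Matrix.vecCons_inj]

theorem eq_exp3 (d : Fin 3 →₀ ℕ) : d = exp3 (d 0) (d 1) (d 2) := by
  ext i; fin_cases i <;> rfl

theorem degree_exp3 (a b c : ℕ) : (exp3 a b c).degree = a + b + c := by
  simp [Finsupp.degree_eq_sum, exp3, Fin.sum_univ_three]

theorem monomial_exp3 {R : Type*} [CommSemiring R] (a b c : ℕ) (r : R) :
    monomial (exp3 a b c) r = C r * X 0 ^ a * X 1 ^ b * X 2 ^ c := by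
  have : exp3 a b c = Finsupp.single 0 a + Finsupp.single 1 b + Finsupp.single 2 c := by
    ext i; fin_cases i <;> simp [exp3]
  simp only [this, X_pow_eq_monomial, C_mul_monomial, monomial_mul, mul_one]

theorem eq_sum_monomial_exp3 {R : Type*} [CommSemiring R] {c : MvPolynomial (Fin 3) R}
    (hc : c.IsHomogeneous 3) :
    c = monomial (exp3 3 0 0) (coeff (exp3 3 0 0) c) + monomial (exp3 0 3 0) (coeff (exp3 0 3 0) c)
      + monomial (exp3 0 0 3) (coeff (exp3 0 0 3) c) + monomial (exp3 2 1 0) (coeff (exp3 2 1 0) c)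
      + monomial (exp3 2 0 1) (coeff (exp3 2 0 1) c) + monomial (exp3 1 2 0) (coeff (exp3 1 2 0) c)
      + monomial (exp3 0 2 1) (coeff (exp3 0 2 1) c) + monomial (exp3 1 0 2) (coeff (exp3 1 0 2) c)
      + monomial (exp3 0 1 2) (coeff (exp3 0 1 2) c)
      + monomial (exp3 1 1 1) (coeff (exp3 1 1 1) c) := by
  ext d
  obtain ⟨a, b, e, rfl⟩ : ∃ a b e, d = exp3 a b e := ⟨_, _, _, eq_exp3 d⟩
  simp only [coeff_add, coeff_monomial, exp3_inj]
  by_cases hd : a + b + e = 3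
  · obtain rfl : e = 3 - a - b := by omega
    have ha : a ≤ 3 := by omega
    have hb : b ≤ 3 - a := by omega
    interval_cases a <;> interval_cases b <;> simp
  · have hne : ∀ a' b' e' : ℕ, a' + b' + e' = 3 → ¬(a' = a ∧ b' = b ∧ e' = e) := by omega
    rw [hc.coeff_eq_zero (by rwa [degree_exp3])]
    simp [hne]

/-- The restrictions of a ternary cubic to the sides `x_l = 0` of the coordinate triangle, as
binary cubics in `(x_{l+1}, x_{l+2})`. -/
noncomputable def sideCubics (c : MvPolynomial (Fin 3) k) : Fin 3 → Cubic k :=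
  ![⟨coeff (exp3 0 0 3) c, coeff (exp3 0 1 2) c, coeff (exp3 0 2 1) c, coeff (exp3 0 3 0) c⟩,
    ⟨coeff (exp3 3 0 0) c, coeff (exp3 2 0 1) c, coeff (exp3 1 0 2) c, coeff (exp3 0 0 3) c⟩,
    ⟨coeff (exp3 0 3 0) c, coeff (exp3 1 2 0) c, coeff (exp3 2 1 0) c, coeff (exp3 3 0 0) c⟩]

theorem eval_eq_homEval_sideCubics {c : MvPolynomial (Fin 3) k} (hc : c.IsHomogeneous 3)
    {l : Fin 3} {v : Fin 3 → k} (hv : v l = 0) :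
    eval v c = (sideCubics c l).homEval (v (l + 1)) (v (l + 2)) := by
  conv_lhs => rw [eq_sum_monomial_exp3 hc]
  simp only [map_add, monomial_exp3, eval_C, eval_X, map_mul, map_pow]
  obtain rfl | rfl | rfl : l = 0 ∨ l = 1 ∨ l = 2 := by fin_cases l <;> simp
  all_goals simp [hv, sideCubics, Cubic.homEval]; ring

theorem eq_of_sideCubics_b_eq_zero_and_c_eq_zero {c : MvPolynomial (Fin 3) k}
    (hc : c.IsHomogeneous 3) (h : ∀ l, (sideCubics c l).b = 0 ∧ (sideCubics c l).c = 0) :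
    c = C (sideCubics c 2).d * X 0 ^ 3 + C (sideCubics c 0).d * X 1 ^ 3
      + C (sideCubics c 1).d * X 2 ^ 3 + coeff (exp3 1 1 1) c • (X 0 * X 1 * X 2) := by
  have h₀ := h 0
  have h₁ := h 1
  have h₂ := h 2
  simp only [sideCubics] at h₀ h₁ h₂
  simp at h₀ h₁ h₂
  conv_lhs => rw [eq_sum_monomial_exp3 hc]
  simp [h₀, h₁, h₂, sideCubics, monomial_exp3, smul_eq_C_mul]
  ring

def sideVec (l : Fin 3) (s t : k) : Fin 3 → k := Pi.single (l + 1) s + Pi.single (l + 2) t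

@[simp] theorem sideVec_self (l : Fin 3) (s t : k) : sideVec l s t l = 0 := by
  simp [sideVec]

@[simp] theorem sideVec_add_one (l : Fin 3) (s t : k) : sideVec l s t (l + 1) = s := by
  simp [sideVec]

@[simp] theorem sideVec_add_two (l : Fin 3) (s t : k) : sideVec l s t (l + 2) = t := by
  simp [sideVec]

theorem sideVec_one_ne_zero (l : Fin 3) (t : k) : sideVec l 1 t ≠ 0 :=
  fun h => one_ne_zero (α := k) (by simpa using congrFun h (l + 1))

noncomputable def sideCoord (l : Fin 3) (p : ℙ k (Fin 3 → k)) : k := p.rep (l + 2) / p.rep (l + 1)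

theorem sideCoord_injOn (l : Fin 3) :
    Set.InjOn (sideCoord l) {p : ℙ k (Fin 3 → k) | p.rep l = 0 ∧ p.rep (l + 1) ≠ 0} := by
  rintro p ⟨hp, hp₁⟩ q ⟨hq, hq₁⟩ hpq
  refine Projectivization.eq_of_smul_rep (p.rep (l + 1) / q.rep (l + 1)) (funext_fin3 l ?_ ?_ ?_)
  · simp [hp, hq]
  · simp [hq₁]
  · simp only [sideCoord, div_eq_div_iff hp₁ hq₁] at hpq
    simp only [Pi.smul_apply, smul_eq_mul]
    field_simp
    linear_combination -hpq

theorem subsingleton_rep_eq_zero_rep_add_one_eq_zero (l : Fin 3) :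
    {p : ℙ k (Fin 3 → k) | p.rep l = 0 ∧ p.rep (l + 1) = 0}.Subsingleton := by
  rintro p ⟨hp, hp₁⟩ q ⟨hq, hq₁⟩
  have hq₂ : q.rep (l + 2) ≠ 0 := fun hq₂ => q.rep_nonzero (funext_fin3 l hq hq₁ hq₂)
  refine Projectivization.eq_of_smul_rep (p.rep (l + 2) / q.rep (l + 2)) (funext_fin3 l ?_ ?_ ?_)
  · simp [hp, hq]
  · simp [hp₁, hq₁]
  · simp [hq₂]

/-- `Y` lies on the coordinate triangle and is cut out on the side `x_l = 0` by the binary cubic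
`B l` in the coordinates `(x_{l+1}, x_{l+2})`. -/
structure TriangleCubics (B : Fin 3 → Cubic k) (Y : Set (ℙ k (Fin 3 → k))) : Prop where
  exists_rep_eq_zero : ∀ p ∈ Y, ∃ l, p.rep l = 0
  mem_iff : ∀ p l, p.rep l = 0 → (p ∈ Y ↔ (B l).homEval (p.rep (l + 1)) (p.rep (l + 2)) = 0)

theorem triangleCubics_sideCubics {c : MvPolynomial (Fin 3) k} (hc : c.IsHomogeneous 3)
    {Y : Set (ℙ k (Fin 3 → k))}
    (hY : Y = {p | p.rep 0 * p.rep 1 * p.rep 2 = 0 ∧ eval p.rep c = 0}) :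
    TriangleCubics (sideCubics c) Y where
  exists_rep_eq_zero p hp := by
    rw [hY] at hp
    rcases mul_eq_zero.1 hp.1 with h | h
    · rcases mul_eq_zero.1 h with h | h
      exacts [⟨0, h⟩, ⟨1, h⟩]
    · exact ⟨2, h⟩
  mem_iff p l hl := by
    have hprod : p.rep 0 * p.rep 1 * p.rep 2 = 0 := by
      rw [← Fin.prod_univ_three]
      exact Finset.prod_eq_zero (Finset.mem_univ l) hl
    rw [hY, Set.mem_ofPred_eq, eval_eq_homEval_sideCubics hc hl]
    simp [hprod]

def sidePoints (Y : Set (ℙ k (Fin 3 → k))) (l : Fin 3) : Set (ℙ k (Fin 3 → k)) :=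
  {p ∈ Y | p.rep l = 0}

theorem sidePoints_subset (Y : Set (ℙ k (Fin 3 → k))) (l : Fin 3) : sidePoints Y l ⊆ Y :=
  Set.sep_subset _ _

noncomputable def sideParams (Y : Set (ℙ k (Fin 3 → k))) (l : Fin 3) : Set k :=
  sideCoord l '' sidePoints Y l

namespace TriangleCubics

variable {B : Fin 3 → Cubic k} {Y : Set (ℙ k (Fin 3 → k))}

theorem subset_union_sidePoints (hT : TriangleCubics B Y) (l : Fin 3) :
    Y ⊆ sidePoints Y l ∪ sidePoints Y (l + 1) ∪ sidePoints Y (l + 2) := by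
  intro p hp
  obtain ⟨m, hm⟩ := hT.exists_rep_eq_zero p hp
  rcases fin3_cases l m with rfl | rfl | rfl
  exacts [Or.inl (Or.inl ⟨hp, hm⟩), Or.inl (Or.inr ⟨hp, hm⟩), Or.inr ⟨hp, hm⟩]

theorem eval_sideCoord_eq_zero (hT : TriangleCubics B Y) {p : ℙ k (Fin 3 → k)} (hp : p ∈ Y)
    {l : Fin 3} (hl : p.rep l = 0) (hl₁ : p.rep (l + 1) ≠ 0) :
    (B l).toPoly.eval (sideCoord l p) = 0 := by
  have hroot := (hT.mem_iff p l hl).1 hp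
  rw [Cubic.homEval_eq_mul_eval hl₁] at hroot
  simpa [hl₁, sideCoord] using hroot

theorem ne_zero [Infinite k] (hT : TriangleCubics B Y) (hY : Y.Finite) (l : Fin 3) : B l ≠ 0 := by
  intro hB
  let f (t : k) : ℙ k (Fin 3 → k) :=
    Projectivization.mk k (sideVec l 1 t) (sideVec_one_ne_zero l t)
  have hf : Function.Injective f := by
    intro t t' h
    obtain ⟨a, ha⟩ := (Projectivization.mk_eq_mk_iff' k _ _ _ _).1 h
    have h₁ := congrFun ha (l + 1)
    have h₂ := congrFun ha (l + 2)
    simp only [Pi.smul_apply, sideVec_add_one, sideVec_add_two, smul_eq_mul, mul_one] at h₁ h₂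
    rw [← h₂, h₁, one_mul]
  refine Set.infinite_of_injective_forall_mem hf (fun t => ?_) hY
  have hl : (f t).rep l = 0 := by simp [f, Projectivization.rep_mk_apply_eq_zero_iff]
  rw [hT.mem_iff _ l hl, hB]
  simp [Cubic.homEval, show (0 : Cubic k) = ⟨0, 0, 0, 0⟩ from rfl]

/-- The points with `x_{l+1} ≠ 0` correspond to roots of `B l`; the only other point of the side is
the vertex `x_{l+1} = 0`, which lies on `Y` only if `B l` has degree at most two. -/
theorem ncard_sidePoints_le_three [Infinite k] (hT : TriangleCubics B Y) (hY : Y.Finite)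
    (l : Fin 3) : (sidePoints Y l).ncard ≤ 3 := by
  set S₁ := {p ∈ sidePoints Y l | p.rep (l + 1) ≠ 0}
  set S₂ := {p ∈ sidePoints Y l | p.rep (l + 1) = 0}
  have hP : (B l).toPoly ≠ 0 := by
    rw [Ne, Cubic.toPoly_eq_zero_iff]
    exact hT.ne_zero hY l
  have hS₁ : S₁.ncard ≤ (B l).toPoly.natDegree := by
    have hinj : Set.InjOn (sideCoord l) S₁ := (sideCoord_injOn l).mono fun p (hp : p ∈ S₁) =>
      (⟨hp.1.2, hp.2⟩ : p.rep l = 0 ∧ p.rep (l + 1) ≠ 0)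
    rw [← hinj.ncard_image]
    refine (Set.ncard_le_ncard ?_ (Polynomial.rootSet_finite _ _)).trans
      (Polynomial.ncard_rootSet_le _ _)
    rintro _ ⟨p, ⟨⟨hpY, hp⟩, hp₁⟩, rfl⟩
    simpa [Polynomial.mem_rootSet_of_ne hP] using hT.eval_sideCoord_eq_zero hpY hp hp₁
  have hS₂ : S₂.ncard ≤ 1 := by
    have hsub : S₂.Subsingleton := (subsingleton_rep_eq_zero_rep_add_one_eq_zero l).anti
      fun p (hp : p ∈ S₂) => ⟨hp.1.2, hp.2⟩
    exact (Set.ncard_le_one hsub.finite).2 fun p hp q hq => hsub hp hq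
  have ha : S₂.Nonempty → (B l).a = 0 := by
    rintro ⟨p, ⟨hpY, hp⟩, hp₁⟩
    have hp₂ : p.rep (l + 2) ≠ 0 := fun hp₂ => p.rep_nonzero (funext_fin3 l hp hp₁ hp₂)
    simpa [Cubic.homEval, hp₁, hp₂] using (hT.mem_iff p l hp).1 hpY
  have hsplit : sidePoints Y l = S₁ ∪ S₂ := by
    ext p
    by_cases hp₁ : p.rep (l + 1) = 0 <;> simp [S₁, S₂, hp₁]
  refine hsplit ▸ (Set.ncard_union_le _ _).trans ?_
  rcases S₂.eq_empty_or_nonempty with h | h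
  · rw [h, Set.ncard_empty]
    exact hS₁.trans Polynomial.natDegree_cubic_le
  · have := Cubic.natDegree_of_a_eq_zero (ha h)
    omega

/-- A vertex on `Y` would be counted on two sides, leaving at most `3 + 2 + 3 = 8` points. -/
theorem rep_add_one_ne_zero [Infinite k] (hT : TriangleCubics B Y) (hcard : Y.ncard = 9)
    {p : ℙ k (Fin 3 → k)} (hp : p ∈ Y) {l : Fin 3} (hl : p.rep l = 0) : p.rep (l + 1) ≠ 0 := by
  intro hl₁
  have hY : Y.Finite := Set.finite_of_ncard_ne_zero (by omega)
  have hfin (m : Fin 3) : (sidePoints Y m).Finite := hY.subset (sidePoints_subset Y m)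
  have hsub : Y ⊆ sidePoints Y l ∪ (sidePoints Y (l + 1) \ {p}) ∪ sidePoints Y (l + 2) := by
    intro q hq
    rcases hT.subset_union_sidePoints l hq with (h | h) | h
    · exact Or.inl (Or.inl h)
    · by_cases hqp : q = p
      · exact Or.inl (Or.inl (hqp ▸ ⟨hp, hl⟩))
      · exact Or.inl (Or.inr ⟨h, hqp⟩)
    · exact Or.inr h
  have hp₁ : p ∈ sidePoints Y (l + 1) := ⟨hp, hl₁⟩
  have hdiff := Set.ncard_sdiff_singleton_of_mem hp₁
  have hcover := (Set.ncard_le_ncard hsub (((hfin _).union (hfin _).sdiff).union (hfin _))).trans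
    (Set.ncard_union_union_le _ _ _)
  have hle := hT.ncard_sidePoints_le_three hY
  have := hle l; have := hle (l + 1); have := hle (l + 2)
  omega

theorem rep_add_two_ne_zero [Infinite k] (hT : TriangleCubics B Y) (hcard : Y.ncard = 9)
    {p : ℙ k (Fin 3 → k)} (hp : p ∈ Y) {l : Fin 3} (hl : p.rep l = 0) : p.rep (l + 2) ≠ 0 :=
  fun hl₂ => hT.rep_add_one_ne_zero hcard hp hl₂ (by rwa [fin3_add_two_add_one])

theorem ncard_sidePoints_eq_three [Infinite k] (hT : TriangleCubics B Y) (hcard : Y.ncard = 9)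
    (l : Fin 3) : (sidePoints Y l).ncard = 3 := by
  have hY : Y.Finite := Set.finite_of_ncard_ne_zero (by omega)
  have hfin (m : Fin 3) : (sidePoints Y m).Finite := hY.subset (sidePoints_subset Y m)
  have hcover := (Set.ncard_le_ncard (hT.subset_union_sidePoints l)
    (((hfin _).union (hfin _)).union (hfin _))).trans (Set.ncard_union_union_le _ _ _)
  have hle := hT.ncard_sidePoints_le_three hY
  have := hle l; have := hle (l + 1); have := hle (l + 2)
  omega

theorem d_ne_zero [Infinite k] (hT : TriangleCubics B Y) (hcard : Y.ncard = 9) (l : Fin 3) :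
    (B l).d ≠ 0 := by
  intro hd
  set p := Projectivization.mk k (sideVec l (1 : k) 0) (sideVec_one_ne_zero l 0)
  have hl : p.rep l = 0 := by simp [p, Projectivization.rep_mk_apply_eq_zero_iff]
  have hl₂ : p.rep (l + 2) = 0 := by simp [p, Projectivization.rep_mk_apply_eq_zero_iff]
  have hp : p ∈ Y := by
    rw [hT.mem_iff p l hl, hl₂]
    simp [Cubic.homEval, hd]
  exact hT.rep_add_two_ne_zero hcard hp hl hl₂

theorem ncard_sideParams [Infinite k] (hT : TriangleCubics B Y) (hcard : Y.ncard = 9)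
    (l : Fin 3) : (sideParams Y l).ncard = 3 := by
  rw [sideParams, Set.InjOn.ncard_image, hT.ncard_sidePoints_eq_three hcard l]
  exact (sideCoord_injOn l).mono fun p (hp : p ∈ sidePoints Y l) =>
    (⟨hp.2, hT.rep_add_one_ne_zero hcard hp.1 hp.2⟩ : p.rep l = 0 ∧ p.rep (l + 1) ≠ 0)

theorem zero_notMem_sideParams [Infinite k] (hT : TriangleCubics B Y) (hcard : Y.ncard = 9)
    (l : Fin 3) : 0 ∉ sideParams Y l := by
  rintro ⟨p, ⟨hp, hl⟩, h⟩
  exact div_ne_zero (hT.rep_add_two_ne_zero hcard hp hl) (hT.rep_add_one_ne_zero hcard hp hl) h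

theorem eval_eq_zero_of_mem_sideParams [Infinite k] (hT : TriangleCubics B Y)
    (hcard : Y.ncard = 9) {l : Fin 3} {t : k} (ht : t ∈ sideParams Y l) :
    (B l).toPoly.eval t = 0 := by
  obtain ⟨p, ⟨hp, hl⟩, rfl⟩ := ht
  exact hT.eval_sideCoord_eq_zero hp hl (hT.rep_add_one_ne_zero hcard hp hl)

/-- The third point `r = α p + β q` on the line through `p ∈ {x_l = 0}` and `q ∈ {x_{l+1} = 0}`
has `r_l ≠ 0` and `r_{l+1} ≠ 0`, so it lies on the side `x_{l+2} = 0`. -/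
theorem neg_inv_mul_mem_sideParams [Infinite k] (hT : TriangleCubics B Y) (hcard : Y.ncard = 9)
    (hSG : IsSylvesterGallai Y) {l : Fin 3} {t u : k} (ht : t ∈ sideParams Y l)
    (hu : u ∈ sideParams Y (l + 1)) : -(t * u)⁻¹ ∈ sideParams Y (l + 2) := by
  obtain ⟨p, ⟨hp, hpl⟩, rfl⟩ := ht
  obtain ⟨q, ⟨hq, hql⟩, rfl⟩ := hu
  have hp₁ := hT.rep_add_one_ne_zero hcard hp hpl
  have hp₂ := hT.rep_add_two_ne_zero hcard hp hpl
  have hq₂ := hT.rep_add_one_ne_zero hcard hq hql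
  have hq₀ := hT.rep_add_two_ne_zero hcard hq hql
  rw [fin3_add_one_add_one] at hq₂
  rw [fin3_add_one_add_two] at hq₀
  obtain ⟨r, hr, hrp, hrq, hspan⟩ := hSG p hp q hq fun h => hp₁ (h ▸ hql)
  obtain ⟨α, β, hαβ⟩ := Submodule.mem_span_pair.1 hspan
  have hrep (n : Fin 3) : r.rep n = α * p.rep n + β * q.rep n := by
    rw [← hαβ]
    simp
  have hβ : β ≠ 0 := by
    rintro rfl
    exact hrp (Projectivization.eq_of_smul_rep α (by rw [← hαβ, zero_smul, add_zero]))
  have hα : α ≠ 0 := by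
    rintro rfl
    exact hrq (Projectivization.eq_of_smul_rep β (by rw [← hαβ, zero_smul, zero_add]))
  have hr₀ : r.rep l ≠ 0 := by simp [hrep, hpl, hβ, hq₀]
  have hr₁ : r.rep (l + 1) ≠ 0 := by simp [hrep, hql, hα, hp₁]
  have hr₂ : r.rep (l + 2) = 0 := by
    obtain ⟨m, hm⟩ := hT.exists_rep_eq_zero r hr
    rcases fin3_cases l m with rfl | rfl | rfl
    exacts [absurd hm hr₀, absurd hm hr₁, hm]
  refine ⟨r, ⟨hr, hr₂⟩, ?_⟩
  have hline := hrep (l + 2)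
  rw [hr₂] at hline
  simp only [sideCoord, fin3_add_two_add_two, fin3_add_two_add_one, fin3_add_one_add_one,
    fin3_add_one_add_two, hrep, hpl, hql]
  field_simp
  linear_combination -(p.rep (l + 1) * q.rep l) * hline

theorem b_eq_zero_and_c_eq_zero [Infinite k] (hT : TriangleCubics B Y) (hcard : Y.ncard = 9)
    (hSG : IsSylvesterGallai Y) (l : Fin 3) : (B l).b = 0 ∧ (B l).c = 0 :=
  (B l).b_eq_zero_and_c_eq_zero_of_pow_three_eq (hT.ncard_sideParams hcard l)
    (fun _ ht => hT.eval_eq_zero_of_mem_sideParams hcard ht)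
    fun _ ht _ ht' => pow_three_eq_of_neg_inv_mul_mem (hT.ncard_sideParams hcard (l + 1))
      (hT.ncard_sideParams hcard (l + 2)) (hT.zero_notMem_sideParams hcard l)
      (hT.zero_notMem_sideParams hcard (l + 1))
      (fun _ ht _ hu => hT.neg_inv_mul_mem_sideParams hcard hSG ht hu) ht ht'

end TriangleCubics

end HessePencil

theorem stmt16_general (k : Type) [Field k] [IsAlgClosed k]
    (c1 c2 : MvPolynomial (Fin 3) k)
    (hc1 : c1.IsHomogeneous 3) (hc2 : c2.IsHomogeneous 3)
    (hxyz : (X 0 * X 1 * X 2 : MvPolynomial (Fin 3) k) ∈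
      Submodule.span k ({c1, c2} : Set (MvPolynomial (Fin 3) k)))
    (Y : Set (Projectivization k (Fin 3 → k)))
    (hY : Y = {p | eval p.rep c1 = 0 ∧ eval p.rep c2 = 0})
    (hcard : Y.ncard = 9)
    (hhesse : ∀ p ∈ Y, ∀ q ∈ Y, p ≠ q → ∃ r ∈ Y, r ≠ p ∧ r ≠ q ∧
      r.rep ∈ Submodule.span k ({p.rep, q.rep} : Set (Fin 3 → k))) :
    ∃ a b c : k, a ≠ 0 ∧ b ≠ 0 ∧ c ≠ 0 ∧
      Submodule.span k ({c1, c2} : Set (MvPolynomial (Fin 3) k)) =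
      Submodule.span k ({MvPolynomial.C a * X 0 ^ 3 + MvPolynomial.C b * X 1 ^ 3 +
        MvPolynomial.C c * X 2 ^ 3, X 0 * X 1 * X 2} : Set (MvPolynomial (Fin 3) k)) := by
  have hxyz0 : (X 0 * X 1 * X 2 : MvPolynomial (Fin 3) k) ≠ 0 :=
    mul_ne_zero (mul_ne_zero (X_ne_zero _) (X_ne_zero _)) (X_ne_zero _)
  obtain ⟨c, hc, hspan⟩ : ∃ c : MvPolynomial (Fin 3) k, c.IsHomogeneous 3 ∧
      Submodule.span k {c1, c2} = Submodule.span k {X 0 * X 1 * X 2, c} := by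
    rcases Submodule.span_pair_eq_span_pair_of_mem hxyz hxyz0 with h | h
    exacts [⟨c1, hc1, h⟩, ⟨c2, hc2, h⟩]
  have hYc : Y = {p | p.rep 0 * p.rep 1 * p.rep 2 = 0 ∧ eval p.rep c = 0} := by
    ext p
    rw [hY]
    simpa using eval_eq_zero_and_eval_eq_zero_iff_of_span_eq hspan p.rep
  have hT := HessePencil.triangleCubics_sideCubics hc hYc
  refine ⟨_, _, _, hT.d_ne_zero hcard 2, hT.d_ne_zero hcard 0, hT.d_ne_zero hcard 1, ?_⟩
  rw [hspan]
  conv_lhs => rw [HessePencil.eq_of_sideCubics_b_eq_zero_and_c_eq_zero hc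
    (hT.b_eq_zero_and_c_eq_zero hcard hhesse)]
  rw [Submodule.span_pair_add_smul]

theorem stmt16 (k : Type) [Field k] [IsAlgClosed k] (h3 : (3 : k) ≠ 0)
    (c1 c2 : MvPolynomial (Fin 3) k)
    (hc1 : c1.IsHomogeneous 3) (hc2 : c2.IsHomogeneous 3)
    (hind : LinearIndependent k ![c1, c2])
    (hxyz : (X 0 * X 1 * X 2 : MvPolynomial (Fin 3) k) ∈
      Submodule.span k ({c1, c2} : Set (MvPolynomial (Fin 3) k)))
    (Y : Set (Projectivization k (Fin 3 → k)))
    (hY : Y = {p | eval p.rep c1 = 0 ∧ eval p.rep c2 = 0})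
    (hcard : Y.ncard = 9)
    (hhesse : ∀ p ∈ Y, ∀ q ∈ Y, p ≠ q → ∃ r ∈ Y, r ≠ p ∧ r ≠ q ∧
      r.rep ∈ Submodule.span k ({p.rep, q.rep} : Set (Fin 3 → k))) :
    ∃ a b c : k, a ≠ 0 ∧ b ≠ 0 ∧ c ≠ 0 ∧
      Submodule.span k ({c1, c2} : Set (MvPolynomial (Fin 3) k)) =
      Submodule.span k ({MvPolynomial.C a * X 0 ^ 3 + MvPolynomial.C b * X 1 ^ 3 +
        MvPolynomial.C c * X 2 ^ 3, X 0 * X 1 * X 2} : Set (MvPolynomial (Fin 3) k)) :=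
  stmt16_general k c1 c2 hc1 hc2 hxyz Y hY hcard hhesse
end
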